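/- Let k be a field of characteristic 3 and S(1,2) the para-Hurwitz superalgebra associated to B(1,2), with basis {1, u, v}, where {u, v} is a symplectic basis of the odd part (⟨u|v⟩ = 1). Then the para-Hurwitz product satisfies 1•1 = 1, 1•x = x•1 = ½x for odd x, u•v = 1 = −v•u, u•u = 0 = v•v; hence S(1,2) is isomorphic to the tiny Kaplansky Jordan superalgebra K₃. -/
import Mathlib


section
variable (k : Type*) [Field k]

/-- The 3-dimensional superspace `k·1 ⊕ V` (`V = k²` with symplectic basis
`{u, v}`), encoded as `k × (k × k)`; coordinates `(α, β, γ) = α1 + βu + γv`. -/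
abbrev K3Sp := k × (k × k)

/-- The Hurwitz product of `B(1,2)`: `1` is the unit and `uv = ⟨u|v⟩1 = 1`,
`vu = −1`, `u² = v² = 0`. -/
def B12mul : K3Sp k → K3Sp k → K3Sp k :=
  fun x y => (x.1 * y.1 + (x.2.1 * y.2.2 - x.2.2 * y.2.1),
    (x.1 * y.2.1 + y.1 * x.2.1, x.1 * y.2.2 + y.1 * x.2.2))

/-- The polar form of the norm of `B(1,2)`. -/
def B12form : K3Sp k → K3Sp k → k :=
  fun x y => 2 * x.1 * y.1 + (x.2.1 * y.2.2 - x.2.2 * y.2.1)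

/-- The standard involution `x̄ = b(x,1)1 − x` of `B(1,2)`. -/
def B12bar : K3Sp k → K3Sp k := fun x => (x.1, -x.2)

/-- The para-Hurwitz product `x • y = x̄ ȳ` of `S(1,2)`. -/
def S12mul : K3Sp k → K3Sp k → K3Sp k :=
  fun x y => B12mul k (B12bar k x) (B12bar k y)

/-- The product of the tiny Kaplansky superalgebra `K₃ = ke ⊕ (kx ⊕ ky)`:
`e² = e`, `ex = ½x`, `ey = ½y`, `xy = e = −yx`, `x² = y² = 0`. -/
def K3mul : K3Sp k → K3Sp k → K3Sp k :=
  fun x y => (x.1 * y.1 + (x.2.1 * y.2.2 - x.2.2 * y.2.1),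
    ((2⁻¹ : k) * (x.1 * y.2.1 + y.1 * x.2.1), (2⁻¹ : k) * (x.1 * y.2.2 + y.1 * x.2.2)))

lemma inv_two_char3 [CharP k 3] : (2⁻¹ : k) = -1 := by
  have h3 : (3 : k) = 0 := CharP.cast_eq_zero k 3
  have : (2 : k) * (-1) = 1 := by linear_combination -h3
  exact inv_eq_of_mul_eq_one_right this

/-- Over a field `k` of characteristic 3, the para-Hurwitz product
of `S(1,2)` satisfies `1•1 = 1`, `1•x = x•1 = ½x` for odd `x`, `u•v = 1 = −v•u`,
`u•u = 0 = v•v`; hence `S(1,2)` is isomorphic to the tiny Kaplansky Jordan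
superalgebra `K₃`. -/
theorem S12_is_Kaplansky [CharP k 3] :
    (S12mul k (1, 0, 0) (1, 0, 0) = ((1 : k), (0 : k), (0 : k))) ∧
    (∀ x : K3Sp k, x.1 = 0 →
      S12mul k (1, 0, 0) x = (2⁻¹ : k) • x ∧ S12mul k x (1, 0, 0) = (2⁻¹ : k) • x) ∧
    (S12mul k (0, 1, 0) (0, 0, 1) = ((1 : k), (0 : k), (0 : k))) ∧
    (S12mul k (0, 0, 1) (0, 1, 0) = -((1 : k), (0 : k), (0 : k))) ∧
    (S12mul k (0, 1, 0) (0, 1, 0) = 0) ∧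
    (S12mul k (0, 0, 1) (0, 0, 1) = 0) ∧
    -- S(1,2) ≅ K₃ as superalgebras
    (∃ f : K3Sp k ≃ₗ[k] K3Sp k,
      (∀ x y : K3Sp k, f (S12mul k x y) = K3mul k (f x) (f y)) ∧
      (∀ x : K3Sp k, x.2 = 0 → (f x).2 = 0) ∧
      (∀ x : K3Sp k, x.1 = 0 → (f x).1 = 0)) := by
  have h2 : (2⁻¹ : k) = -1 := inv_two_char3 k
  refine ⟨?_, ?_, ?_, ?_, ?_, ?_, ?_⟩
  · simp [S12mul, B12mul, B12bar]
  · intro x hx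
    obtain ⟨a, b, c⟩ := x
    refine ⟨?_, ?_⟩ <;>
      simp_all [S12mul, B12mul, B12bar, Prod.ext_iff, h2]
  · simp [S12mul, B12mul, B12bar]
  · simp [S12mul, B12mul, B12bar, Prod.ext_iff]
  · simp [S12mul, B12mul, B12bar, Prod.ext_iff]
  · simp [S12mul, B12mul, B12bar, Prod.ext_iff]
  · refine ⟨LinearEquiv.refl k _, ?_, ?_, ?_⟩
    · intro x y
      simp [S12mul, B12mul, B12bar, K3mul, h2, Prod.ext_iff]
      constructor <;> ring
    · intro x hx; simpa using hx
    · intro x hx; simpa using hx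

end
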